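/- Let p be an odd prime, f₁, f₂ : F_p → ℂ, and define F(x) = (1/p) · Σ_{y ∈ F_p} f₁(x + y) · f₂(x + y²). Then ‖F − E[f₁]·E[f₂]‖₂ = (1/√p) · ( Σ_{s ∈ F_p} | Σ_{n ∈ F_p, n ≠ 0} f̂₁(s − n) · f̂₂(n) · χ(n) · K(s − n, n) |² )^(1/2), where K(x, y) = e_p(−x² · (4y)^{−1}) for y ≠ 0 and K(x, 0) = 0, and χ is the Legendre symbol modulo p. -/

import Mathlib

open Finset

/-- `e_p(x) = exp(2πi x / p)` for `x : ZMod p`. -/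
noncomputable def ep (p : ℕ) [NeZero p] (x : ZMod p) : ℂ :=
  Complex.exp (2 * (Real.pi : ℂ) * Complex.I * (x.val : ℂ) / (p : ℂ))

/-- Average `E[f] = (1/p) Σ_x f(x)`. -/
noncomputable def avg (p : ℕ) [NeZero p] (f : ZMod p → ℂ) : ℂ :=
  (1 / (p : ℂ)) * ∑ x : ZMod p, f x

/-- Normalized L²-norm. -/
noncomputable def nrm2 (p : ℕ) [NeZero p] (f : ZMod p → ℂ) : ℝ :=
  Real.sqrt ((1 / (p : ℝ)) * ∑ x : ZMod p, ‖f x‖ ^ 2)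

/-- Fourier transform `f̂(z) = (1/p) Σ_x e_p(-xz) f(x)`. -/
noncomputable def ft (p : ℕ) [NeZero p] (f : ZMod p → ℂ) (z : ZMod p) : ℂ :=
  (1 / (p : ℂ)) * ∑ x : ZMod p, ep p (-(x * z)) * f x

/-- The quadratic kernel `K(x,y) = e_p(-x²(4y)⁻¹)` for `y ≠ 0`, `0` otherwise. -/
noncomputable def Kq (p : ℕ) [NeZero p] (x y : ZMod p) : ℂ :=
  if y = 0 then 0 else ep p (-(x ^ 2 * (4 * y)⁻¹))

/-!
Expanding `f₁` and `f₂` into Fourier series turns `F x` into a sum over pairs of frequencies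
`(a, b)` weighted by `∑ y, e_p(b y² + a y)`. For `b = 0` this is `p` or `0` according as `a = 0`
or not, which produces the term `E[f₁] E[f₂]`; for `b ≠ 0` completing the square and counting
square roots via the quadratic character give `K(a, b) χ(b) G`, with `G = ∑ y, e_p(y²)`.
So `F - E[f₁] E[f₂]` has Fourier coefficients `G / p` times the inner sums of the statement,
and Parseval together with `|G|² = p` gives the identity.
-/

section QuadraticExponentialSums

variable {F : Type*} [Field F] [Fintype F] [DecidableEq F]

lemma sum_comp_sq (hF : ringChar F ≠ 2) (f : F → ℂ) :
    ∑ y, f (y ^ 2) = ∑ u, ((quadraticChar F u : ℂ) + 1) * f u := by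
  rw [← Fintype.sum_fiberwise' (fun y : F ↦ y ^ 2)]
  refine sum_congr rfl fun u _ ↦ ?_
  have hcard : (Fintype.card {y : F // y ^ 2 = u} : ℤ) = quadraticChar F u + 1 := by
    rw [← quadraticChar_card_sqrts hF u, Set.toFinset_card]
    rfl
  rw [sum_const, card_univ, nsmul_eq_mul]
  exact_mod_cast congrArg (fun n : ℤ ↦ (n : ℂ) * f u) hcard

variable {ψ : AddChar F ℂ}

lemma sum_apply_mul_sq (hF : ringChar F ≠ 2) (hψ : ψ.IsPrimitive) {b : F} (hb : b ≠ 0) :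
    ∑ y, ψ (b * y ^ 2) = quadraticChar F b * ∑ y, ψ (y ^ 2) := by
  have hsum_zero : ∀ {c : F}, c ≠ 0 → ∑ u, ψ (c * u) = 0 := fun {c} hc ↦ by
    simpa [mul_comm, hc] using AddChar.sum_mulShift c hψ
  have hψ_sum : ∑ u, ψ u = 0 := by simpa using hsum_zero one_ne_zero
  simp only [sum_comp_sq hF (fun u ↦ ψ (b * u)), sum_comp_sq hF (fun u ↦ ψ u), add_mul, one_mul,
    sum_add_distrib, hsum_zero hb, hψ_sum, add_zero, mul_sum]
  refine Fintype.sum_bijective (b * ·) (mulLeft_bijective₀ b hb) _ _ fun u ↦ ?_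
  have hχb : (quadraticChar F b : ℂ) ^ 2 = 1 := by exact_mod_cast quadraticChar_sq_one hb
  simp only [map_mul, Int.cast_mul]
  linear_combination (quadraticChar F u * ψ (b * u) : ℂ) * hχb.symm

lemma sum_apply_quadratic (hF : ringChar F ≠ 2) (hψ : ψ.IsPrimitive) {b : F} (hb : b ≠ 0)
    (a : F) :
    ∑ y, ψ (b * y ^ 2 + a * y) =
      ψ (-(a ^ 2 * (4 * b)⁻¹)) * quadraticChar F b * ∑ y, ψ (y ^ 2) := by
  have h2 : (2 : F) ≠ 0 := Ring.two_ne_zero hF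
  have h4 : (4 : F) ≠ 0 := by simpa [show (4 : F) = 2 * 2 by norm_num] using mul_ne_zero h2 h2
  rw [mul_assoc, ← sum_apply_mul_sq hF hψ hb, mul_sum,
    ← Equiv.sum_comp (Equiv.subRight (a * (2 * b)⁻¹))]
  refine sum_congr rfl fun y _ ↦ ?_
  rw [← AddChar.map_add_eq_mul, Equiv.subRight_apply]
  congr 1
  field_simp
  ring

lemma norm_sum_apply_sq_sq (hF : ringChar F ≠ 2) (hψ : ψ.IsPrimitive) :
    ‖∑ y, ψ (y ^ 2)‖ ^ 2 = Fintype.card F := by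
  have h2 : (2 : F) ≠ 0 := Ring.two_ne_zero hF
  have hshift : ∀ z, ∑ y, ψ (y ^ 2) * ψ (-z ^ 2) = ∑ t, ψ (t ^ 2) * ψ (z * (2 * t)) := by
    intro z
    rw [← Equiv.sum_comp (Equiv.addRight z)]
    refine sum_congr rfl fun t _ ↦ ?_
    simp only [Equiv.coe_addRight, ← AddChar.map_add_eq_mul]
    congr 1
    ring
  have hcross : ∑ z, ∑ t, ψ (t ^ 2) * ψ (z * (2 * t)) = Fintype.card F := by
    rw [sum_comm]
    simp only [← mul_sum, AddChar.sum_mulShift _ hψ]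
    simp [h2]
  rw [← Complex.ofReal_inj]
  push_cast
  rw [← Complex.mul_conj', map_sum, sum_mul_sum, sum_comm]
  simp_rw [← AddChar.map_neg_eq_conj, hshift]
  exact hcross

end QuadraticExponentialSums

section FourierAnalysis

variable {N : ℕ} [NeZero N]

lemma ep_eq_stdAddChar : ep N = ZMod.stdAddChar := by
  ext x
  rw [ZMod.stdAddChar_apply, ZMod.toCircle_apply, ep]

lemma ep_add (u v : ZMod N) : ep N (u + v) = ep N u * ep N v := by
  simp only [ep_eq_stdAddChar, AddChar.map_add_eq_mul]

lemma sum_ep_mul (u : ZMod N) : ∑ z, ep N (z * u) = if u = 0 then (N : ℂ) else 0 := by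
  simp [ep_eq_stdAddChar, AddChar.sum_mulShift u (ZMod.isPrimitive_stdAddChar N)]

lemma ft_zero (f : ZMod N → ℂ) : ft N f 0 = avg N f := by
  simp [ft, avg, ep_eq_stdAddChar]

lemma sum_ft_mul_ep (f : ZMod N → ℂ) (x : ZMod N) : ∑ z, ft N f z * ep N (x * z) = f x := by
  have hN : (N : ℂ) ≠ 0 := NeZero.ne _
  calc ∑ z, ft N f z * ep N (x * z)
      = 1 / N * ∑ w, f w * ∑ z, ep N (z * (x - w)) := by
        simp only [ft, mul_sum, sum_mul]
        rw [sum_comm]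
        refine sum_congr rfl fun w _ ↦ sum_congr rfl fun z _ ↦ ?_
        rw [show z * (x - w) = -(w * z) + x * z by ring, ep_add]
        ring
    _ = f x := by
        simp only [sum_ep_mul, sub_eq_zero, mul_ite, mul_zero, sum_ite_eq, mem_univ,
          if_true]
        field_simp

lemma sum_norm_sq_sum_mul_ep (c : ZMod N → ℂ) :
    ∑ x, ‖∑ s, c s * ep N (s * x)‖ ^ 2 = N * ∑ s, ‖c s‖ ^ 2 := by
  have hconj : ∀ u, starRingEnd ℂ (ep N u) = ep N (-u) := fun u ↦ by
    simp only [ep_eq_stdAddChar, AddChar.map_neg_eq_conj]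
  rw [← Complex.ofReal_inj]
  push_cast
  calc ∑ x, ((‖∑ s, c s * ep N (s * x)‖ : ℂ)) ^ 2
      = ∑ s, ∑ t, c s * starRingEnd ℂ (c t) * ∑ x, ep N (x * (s - t)) := by
        simp_rw [← Complex.mul_conj', map_sum, map_mul, hconj, sum_mul_sum,
          mul_sum]
        rw [sum_comm]
        refine sum_congr rfl fun s _ ↦ ?_
        rw [sum_comm]
        refine sum_congr rfl fun t _ ↦ sum_congr rfl fun x _ ↦ ?_
        rw [show x * (s - t) = s * x + -(t * x) by ring, ep_add]
        ring
    _ = N * ∑ s, (‖c s‖ : ℂ) ^ 2 := by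
        simp [sum_ep_mul, sub_eq_zero, mul_sum, Complex.mul_conj', mul_comm]

lemma nrm2_sum_mul_ep (c : ZMod N → ℂ) :
    nrm2 N (fun x ↦ ∑ s, c s * ep N (s * x)) = Real.sqrt (∑ s, ‖c s‖ ^ 2) := by
  have hN : (N : ℝ) ≠ 0 := NeZero.ne _
  rw [nrm2, sum_norm_sq_sum_mul_ep, one_div, inv_mul_cancel_left₀ hN]

lemma sum_shift_mul_shift_sq (f₁ f₂ : ZMod N → ℂ) (x : ZMod N) :
    ∑ y, f₁ (x + y) * f₂ (x + y ^ 2) =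
      ∑ a, ∑ b, ft N f₁ a * ft N f₂ b * ep N ((a + b) * x) * ∑ y, ep N (b * y ^ 2 + a * y) := by
  calc ∑ y, f₁ (x + y) * f₂ (x + y ^ 2)
      = ∑ y, ∑ a, ∑ b,
          ft N f₁ a * ft N f₂ b * ep N ((a + b) * x) * ep N (b * y ^ 2 + a * y) := by
        refine sum_congr rfl fun y _ ↦ ?_
        rw [← sum_ft_mul_ep f₁ (x + y), ← sum_ft_mul_ep f₂ (x + y ^ 2), sum_mul_sum]
        refine sum_congr rfl fun a _ ↦ sum_congr rfl fun b _ ↦ ?_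
        rw [mul_mul_mul_comm, ← ep_add, mul_assoc _ (ep N _), ← ep_add]
        congr 2
        ring
    _ = _ := by
        simp_rw [mul_sum]
        rw [sum_comm]
        exact sum_congr rfl fun a _ ↦ sum_comm

end FourierAnalysis

section OddPrime

variable {p : ℕ} [Fact p.Prime]

lemma sum_ep_quadratic (hp : p ≠ 2) (a b : ZMod p) :
    ∑ y, ep p (b * y ^ 2 + a * y) =
      (if a = 0 ∧ b = 0 then (p : ℂ) else 0) +
        Kq p a b * quadraticChar (ZMod p) b * ∑ y, ep p (y ^ 2) := by
  by_cases hb : b = 0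
  · simp only [hb, and_true, Kq, if_true, zero_mul, zero_add, add_zero]
    simp_rw [mul_comm a]
    exact sum_ep_mul a
  · have hchar : ringChar (ZMod p) ≠ 2 := by rwa [ZMod.ringChar_zmod_n]
    simp only [ep_eq_stdAddChar, hb, and_false, if_false, zero_add, Kq]
    exact sum_apply_quadratic hchar (ZMod.isPrimitive_stdAddChar p) hb a

lemma correlation_sub_avg_mul_avg_eq (hp : p ≠ 2) (f₁ f₂ : ZMod p → ℂ) (x : ZMod p) :
    1 / (p : ℂ) * ∑ y, f₁ (x + y) * f₂ (x + y ^ 2) - avg p f₁ * avg p f₂ =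
      ∑ s, (∑ y, ep p (y ^ 2)) / p *
        (∑ n, ft p f₁ (s - n) * ft p f₂ n * quadraticChar (ZMod p) n * Kq p (s - n) n) *
          ep p (s * x) := by
  have hp0 : (p : ℂ) ≠ 0 := NeZero.ne _
  set G := ∑ y : ZMod p, ep p (y ^ 2)
  have hconst : ∑ a, ∑ b, ft p f₁ a * ft p f₂ b * ep p ((a + b) * x) *
      (if a = 0 ∧ b = 0 then (p : ℂ) else 0) = p * (avg p f₁ * avg p f₂) := by
    simp only [ep_eq_stdAddChar, ite_and, mul_ite, mul_zero, sum_ite_irrel,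
      sum_ite_eq', mem_univ, if_true, ft_zero, add_zero, sum_const_zero,
      zero_mul, AddChar.map_zero_eq_one, mul_one]
    ring
  have hosc : ∑ a, ∑ b, ft p f₁ a * ft p f₂ b * ep p ((a + b) * x) *
      (Kq p a b * quadraticChar (ZMod p) b * G) =
      ∑ s, G * (∑ n, ft p f₁ (s - n) * ft p f₂ n * quadraticChar (ZMod p) n * Kq p (s - n) n) *
          ep p (s * x) := by
    simp_rw [mul_sum, sum_mul]
    rw [sum_comm]
    conv_rhs => rw [sum_comm]
    refine sum_congr rfl fun n _ ↦ ?_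
    rw [← (Equiv.subRight n).sum_comp]
    refine sum_congr rfl fun s _ ↦ ?_
    simp only [Equiv.subRight_apply, sub_add_cancel]
    ring
  rw [sum_shift_mul_shift_sq]
  simp_rw [sum_ep_quadratic hp, mul_add, sum_add_distrib]
  rw [hconst, hosc, mul_add, one_div, inv_mul_cancel_left₀ hp0, add_sub_cancel_left,
    mul_sum]
  exact sum_congr rfl fun s _ ↦ by ring

end OddPrime

theorem stmt5 (p : ℕ) [Fact p.Prime] (hodd : p ≠ 2) (f₁ f₂ F : ZMod p → ℂ)
    (hF : ∀ x, F x = (1 / (p : ℂ)) * ∑ y : ZMod p, f₁ (x + y) * f₂ (x + y ^ 2)) :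
    nrm2 p (fun x => F x - avg p f₁ * avg p f₂) =
      (1 / Real.sqrt p) *
        (∑ s : ZMod p, ‖∑ n ∈ Finset.univ.filter (fun n : ZMod p => n ≠ 0),
          ft p f₁ (s - n) * ft p f₂ n * (legendreSym p (n.val : ℤ) : ℂ) *
            Kq p (s - n) n‖ ^ 2) ^ ((1 : ℝ) / 2) := by
  have hc : ∀ s, ∑ n ∈ univ.filter (fun n : ZMod p => n ≠ 0),
      ft p f₁ (s - n) * ft p f₂ n * (legendreSym p (n.val : ℤ) : ℂ) * Kq p (s - n) n =
        ∑ n, ft p f₁ (s - n) * ft p f₂ n * quadraticChar (ZMod p) n * Kq p (s - n) n := by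
    intro s
    rw [sum_filter_of_ne fun n _ h ↦ by rintro rfl; simp [Kq] at h]
    simp only [legendreSym, Int.cast_natCast, ZMod.natCast_zmod_val]
  have hG : ‖∑ y : ZMod p, ep p (y ^ 2)‖ ^ 2 = p := by
    simpa [ep_eq_stdAddChar] using
      norm_sum_apply_sq_sq (by rwa [ZMod.ringChar_zmod_n]) (ZMod.isPrimitive_stdAddChar p)
  simp_rw [hF, correlation_sub_avg_mul_avg_eq hodd, nrm2_sum_mul_ep, hc, norm_mul, norm_div,
    mul_pow, div_pow, hG, Complex.norm_natCast, ← mul_sum]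
  rw [show (p : ℝ) / p ^ 2 = 1 / p by field_simp, Real.sqrt_mul (by positivity),
    Real.sqrt_eq_rpow (∑ _, _), one_div (p : ℝ), Real.sqrt_inv, one_div (√(p : ℝ))]
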